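/- arXiv:2510.03338 — 2 statements merged into one kernel-verified Lean document; each statement's English description precedes it below -/
import Mathlib

section
/- Let α > 0, μ ∈ ℝ, σ > 0 and ξ < 0 with ξ ≥ −α/(1+α). Then each of the three functions x ↦ S_μ(x) · f(x; μ,σ,ξ)^α, x ↦ S_σ(x) · f(x; μ,σ,ξ)^α, and x ↦ S_ξ(x) · f(x; μ,σ,ξ)^α is bounded on the open interval (−∞, μ − σ/ξ). -/
open MeasureTheory Real

/-- `t(x) = 1 + ξ (x-μ)/σ`. -/
noncomputable def gevT (μ σ ξ x : ℝ) : ℝ := 1 + ξ * ((x - μ) / σ)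

/-- The Generalized Extreme-Value (GEV) density with shape `ξ ≠ 0`. -/
noncomputable def gevDensity (μ σ ξ x : ℝ) : ℝ :=
  if 0 < gevT μ σ ξ x then
    σ⁻¹ * gevT μ σ ξ x ^ (-(ξ + 1) / ξ) *
      Real.exp (-(gevT μ σ ξ x ^ (-1 / ξ)))
  else 0

/-- The location score `S_μ(x) = (1/(σ t(x))) (ξ + 1 - t(x)^{-1/ξ})`. -/
noncomputable def scoreMu (μ σ ξ x : ℝ) : ℝ :=
  (σ * gevT μ σ ξ x)⁻¹ * (ξ + 1 - gevT μ σ ξ x ^ (-1 / ξ))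

/-- The scale score `S_σ(x) = -1/σ + ((x-μ)/(σ² t(x))) (ξ + 1 - t(x)^{-1/ξ})`. -/
noncomputable def scoreSigma (μ σ ξ x : ℝ) : ℝ :=
  -σ⁻¹ + ((x - μ) / (σ ^ 2 * gevT μ σ ξ x)) * (ξ + 1 - gevT μ σ ξ x ^ (-1 / ξ))

/-- The shape score
`S_ξ(x) = (1/ξ²) log t(x) (1 - t(x)^{-1/ξ}) - ((x-μ)/(ξσ t(x))) (ξ + 1 - t(x)^{-1/ξ})`. -/
noncomputable def scoreXi (μ σ ξ x : ℝ) : ℝ :=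
  (1 / ξ ^ 2) * Real.log (gevT μ σ ξ x) * (1 - gevT μ σ ξ x ^ (-1 / ξ)) -
    ((x - μ) / (ξ * σ * gevT μ σ ξ x)) * (ξ + 1 - gevT μ σ ξ x ^ (-1 / ξ))

open Filter Asymptotics Set

/-!
In the variable `s = t(x)^{-1/ξ}`, which sweeps out `(0, ∞)` as `x` runs over the support,
`f^α = σ^{-α} s^{α(1+ξ)} e^{-α s}`, `1/t = s^ξ` and `log t = -ξ log s`. Each score times `f^α`
thus becomes a combination of terms `s^e e^{-α s}` and `log s · s^e e^{-α s}` with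
`e ∈ {α(1+ξ), α(1+ξ)+ξ, α(1+ξ)+1, α(1+ξ)+ξ+1}`. The condition `ξ ≥ -α/(1+α)` says exactly that
`α(1+ξ)+ξ ≥ 0`, so every exponent is nonnegative, and such terms are bounded on `(0, ∞)`:
`s^e e^{-cs} ≤ (e/c)^e` and `|log s| ≤ s^{-e}/e + s`.
-/

section RpowMulExp

variable {e c s : ℝ}

theorem rpow_mul_exp_neg_mul_le (he : 0 ≤ e) (hc : 0 < c) (hs : 0 < s) :
    s ^ e * exp (-(c * s)) ≤ (e / c) ^ e := by
  rcases he.eq_or_lt with rfl | he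
  · simpa using mul_pos hc hs |>.le
  have hec : 0 < e / c := div_pos he hc
  have hlog := mul_le_mul_of_nonneg_left (log_le_sub_one_of_pos (div_pos hs hec)) he.le
  rw [log_div hs.ne' hec.ne'] at hlog
  rw [rpow_def_of_pos hs, rpow_def_of_pos hec, ← exp_add, exp_le_exp]
  have : e * (s / (e / c)) = c * s := by field_simp
  nlinarith

theorem abs_log_le_inv_mul_rpow_neg_add (he : 0 < e) (hs : 0 < s) :
    |log s| ≤ e⁻¹ * s ^ (-e) + s := by
  have hpos : 0 < s ^ (-e) := rpow_pos_of_pos hs _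
  have hlog := log_le_sub_one_of_pos (rpow_pos_of_pos hs (-e))
  rw [log_rpow hs] at hlog
  rw [abs_le]
  constructor
  · have : -log s ≤ e⁻¹ * s ^ (-e) := by
      rw [← div_eq_inv_mul, le_div_iff₀ he]; linarith
    linarith
  · linarith [log_le_sub_one_of_pos hs, mul_pos (inv_pos.2 he) hpos]

theorem boundedAtFilter_rpow_mul_exp_neg_mul (he : 0 ≤ e) (hc : 0 < c) :
    BoundedAtFilter (𝓟 (Ioi 0)) fun s => s ^ e * exp (-(c * s)) := by
  refine isBigO_principal.2 ⟨(e / c) ^ e, fun s (hs : 0 < s) => ?_⟩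
  rw [norm_of_nonneg (by positivity), Pi.one_apply, norm_one, mul_one]
  exact rpow_mul_exp_neg_mul_le he hc hs

theorem boundedAtFilter_log_mul_rpow_mul_exp_neg_mul (he : 0 < e) (hc : 0 < c) :
    BoundedAtFilter (𝓟 (Ioi 0)) fun s => log s * (s ^ e * exp (-(c * s))) := by
  refine isBigO_principal.2 ⟨e⁻¹ + ((e + 1) / c) ^ (e + 1), fun s (hs : 0 < s) => ?_⟩
  have hexp : exp (-(c * s)) ≤ 1 := exp_le_one_iff.2 (by nlinarith)
  have hsplit : (e⁻¹ * s ^ (-e) + s) * (s ^ e * exp (-(c * s))) =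
      e⁻¹ * exp (-(c * s)) + s ^ (e + 1) * exp (-(c * s)) := by
    rw [rpow_add_one hs.ne', add_mul, mul_assoc e⁻¹, ← mul_assoc (s ^ (-e)), ← rpow_add hs,
      neg_add_cancel, rpow_zero]
    ring
  rw [norm_mul, norm_of_nonneg (by positivity : 0 ≤ s ^ e * exp (-(c * s))), Pi.one_apply,
    norm_one, mul_one, Real.norm_eq_abs]
  calc |log s| * (s ^ e * exp (-(c * s)))
      ≤ (e⁻¹ * s ^ (-e) + s) * (s ^ e * exp (-(c * s))) := by
        gcongr; exact abs_log_le_inv_mul_rpow_neg_add he hs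
    _ ≤ e⁻¹ + ((e + 1) / c) ^ (e + 1) := by
        rw [hsplit]
        gcongr
        · exact mul_le_of_le_one_right (inv_pos.2 he).le hexp
        · exact rpow_mul_exp_neg_mul_le (by linarith) hc hs

theorem boundedAtFilter_sub_mul_rpow_mul_exp_neg_mul (he : 0 ≤ e) (hc : 0 < c) (a : ℝ) :
    BoundedAtFilter (𝓟 (Ioi 0)) fun s => (a - s) * (s ^ e * exp (-(c * s))) := by
  refine (((boundedAtFilter_rpow_mul_exp_neg_mul he hc).const_mul_left a).sub
    (boundedAtFilter_rpow_mul_exp_neg_mul (e := e + 1) (by linarith) hc)).congr' ?_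
    EventuallyEq.rfl
  filter_upwards [mem_principal_self (Ioi (0 : ℝ))] with s (hs : 0 < s)
  rw [rpow_add_one hs.ne']
  ring

theorem boundedAtFilter_log_mul_sub_mul_rpow_mul_exp_neg_mul (he : 0 < e) (hc : 0 < c) (a : ℝ) :
    BoundedAtFilter (𝓟 (Ioi 0)) fun s => log s * ((a - s) * (s ^ e * exp (-(c * s)))) := by
  refine (((boundedAtFilter_log_mul_rpow_mul_exp_neg_mul he hc).const_mul_left a).sub
    (boundedAtFilter_log_mul_rpow_mul_exp_neg_mul (e := e + 1) (by linarith) hc)).congr' ?_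
    EventuallyEq.rfl
  filter_upwards [mem_principal_self (Ioi (0 : ℝ))] with s (hs : 0 < s)
  rw [rpow_add_one hs.ne']
  ring

end RpowMulExp

theorem exists_abs_le_of_boundedAtFilter_principal {α : Type*} {f : α → ℝ} {S : Set α}
    (h : BoundedAtFilter (𝓟 S) f) : ∃ C, ∀ x ∈ S, |f x| ≤ C := by
  obtain ⟨C, hC⟩ := isBigO_principal.1 h
  exact ⟨C, fun x hx => by simpa using hC x hx⟩

noncomputable def gevS (μ σ ξ x : ℝ) : ℝ := gevT μ σ ξ x ^ (-1 / ξ)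

section GEV

variable {α μ σ ξ x : ℝ}

theorem gevT_pos (hσ : 0 < σ) (hξ : ξ < 0) (hx : x < μ - σ / ξ) : 0 < gevT μ σ ξ x := by
  have : σ / ξ < μ - x := by linarith
  rw [div_lt_iff_of_neg hξ] at this
  rw [gevT, ← mul_div_assoc, one_add_div hσ.ne']
  exact div_pos (by linarith) hσ

theorem gevS_pos (ht : 0 < gevT μ σ ξ x) : 0 < gevS μ σ ξ x :=
  rpow_pos_of_pos ht _

theorem gevS_rpow_eq_inv_gevT (hξ : ξ ≠ 0) (ht : 0 < gevT μ σ ξ x) :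
    gevS μ σ ξ x ^ ξ = (gevT μ σ ξ x)⁻¹ := by
  rw [gevS, ← rpow_mul ht.le, div_mul_cancel₀ _ hξ, rpow_neg_one]

theorem log_gevT_eq_neg_mul_log_gevS (hξ : ξ ≠ 0) (ht : 0 < gevT μ σ ξ x) :
    log (gevT μ σ ξ x) = -ξ * log (gevS μ σ ξ x) := by
  rw [gevS, log_rpow ht]
  field_simp

theorem sub_eq_mul_gevT_sub_one (hσ : σ ≠ 0) (hξ : ξ ≠ 0) :
    x - μ = σ / ξ * (gevT μ σ ξ x - 1) := by
  rw [gevT]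
  field_simp
  ring

theorem gevDensity_rpow (hσ : 0 < σ) (ht : 0 < gevT μ σ ξ x) :
    gevDensity μ σ ξ x ^ α =
      σ⁻¹ ^ α * (gevS μ σ ξ x ^ (α * (1 + ξ)) * exp (-(α * gevS μ σ ξ x))) := by
  rw [gevDensity, if_pos ht, mul_rpow (by positivity) (exp_pos _).le,
    mul_rpow (by positivity) (by positivity), ← exp_mul, gevS, ← rpow_mul ht.le,
    ← rpow_mul ht.le, show -(ξ + 1) / ξ * α = -1 / ξ * (α * (1 + ξ)) by ring, neg_mul,
    mul_comm _ α, mul_assoc]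

theorem boundedAtFilter_comp_gevS {F : ℝ → ℝ} (hF : BoundedAtFilter (𝓟 (Ioi 0)) F)
    (hσ : 0 < σ) (hξ : ξ < 0) :
    BoundedAtFilter (𝓟 (Iio (μ - σ / ξ))) fun x => F (gevS μ σ ξ x) :=
  hF.comp_tendsto (tendsto_principal_principal.2 fun _ hx => gevS_pos (gevT_pos hσ hξ hx))

theorem scoreMu_mul_gevDensity_rpow (hσ : 0 < σ) (hξ : ξ ≠ 0) (ht : 0 < gevT μ σ ξ x) :
    scoreMu μ σ ξ x * gevDensity μ σ ξ x ^ α = σ⁻¹ ^ α * σ⁻¹ *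
      ((ξ + 1 - gevS μ σ ξ x) *
        (gevS μ σ ξ x ^ (α * (1 + ξ) + ξ) * exp (-(α * gevS μ σ ξ x)))) := by
  rw [scoreMu, ← gevS.eq_1, gevDensity_rpow hσ ht, rpow_add (gevS_pos ht),
    gevS_rpow_eq_inv_gevT hξ ht, mul_inv]
  ring

theorem scoreSigma_mul_gevDensity_rpow (hσ : 0 < σ) (hξ : ξ ≠ 0) (ht : 0 < gevT μ σ ξ x) :
    scoreSigma μ σ ξ x * gevDensity μ σ ξ x ^ α = σ⁻¹ ^ α * σ⁻¹ *
      (ξ⁻¹ * ((ξ + 1 - gevS μ σ ξ x) *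
          (gevS μ σ ξ x ^ (α * (1 + ξ)) * exp (-(α * gevS μ σ ξ x))) -
        (ξ + 1 - gevS μ σ ξ x) *
          (gevS μ σ ξ x ^ (α * (1 + ξ) + ξ) * exp (-(α * gevS μ σ ξ x)))) -
      gevS μ σ ξ x ^ (α * (1 + ξ)) * exp (-(α * gevS μ σ ξ x))) := by
  rw [scoreSigma, ← gevS.eq_1, gevDensity_rpow hσ ht, rpow_add (gevS_pos ht),
    gevS_rpow_eq_inv_gevT hξ ht, sub_eq_mul_gevT_sub_one (x := x) (μ := μ) hσ.ne' hξ]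
  field_simp
  ring

theorem scoreXi_mul_gevDensity_rpow (hσ : 0 < σ) (hξ : ξ ≠ 0) (ht : 0 < gevT μ σ ξ x) :
    scoreXi μ σ ξ x * gevDensity μ σ ξ x ^ α = σ⁻¹ ^ α *
      (-ξ⁻¹ * (log (gevS μ σ ξ x) * ((1 - gevS μ σ ξ x) *
          (gevS μ σ ξ x ^ (α * (1 + ξ)) * exp (-(α * gevS μ σ ξ x))))) -
        (ξ ^ 2)⁻¹ * ((ξ + 1 - gevS μ σ ξ x) *
          (gevS μ σ ξ x ^ (α * (1 + ξ)) * exp (-(α * gevS μ σ ξ x))) -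
        (ξ + 1 - gevS μ σ ξ x) *
          (gevS μ σ ξ x ^ (α * (1 + ξ) + ξ) * exp (-(α * gevS μ σ ξ x))))) := by
  rw [scoreXi, ← gevS.eq_1, gevDensity_rpow hσ ht, rpow_add (gevS_pos ht),
    gevS_rpow_eq_inv_gevT hξ ht, sub_eq_mul_gevT_sub_one (x := x) (μ := μ) hσ.ne' hξ,
    log_gevT_eq_neg_mul_log_gevS hξ ht]
  field_simp

theorem boundedAtFilter_scoreMu_mul_gevDensity_rpow (hα : 0 < α) (hσ : 0 < σ) (hξ : ξ < 0)
    (hexp : 0 ≤ α * (1 + ξ) + ξ) :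
    BoundedAtFilter (𝓟 (Iio (μ - σ / ξ))) fun x => scoreMu μ σ ξ x * gevDensity μ σ ξ x ^ α := by
  refine (boundedAtFilter_comp_gevS (μ := μ)
    ((boundedAtFilter_sub_mul_rpow_mul_exp_neg_mul hexp hα (ξ + 1)).const_mul_left
      (σ⁻¹ ^ α * σ⁻¹)) hσ hξ).congr' ?_ EventuallyEq.rfl
  filter_upwards [mem_principal_self (Iio (μ - σ / ξ))] with x hx
  exact (scoreMu_mul_gevDensity_rpow hσ hξ.ne (gevT_pos hσ hξ hx)).symm

theorem boundedAtFilter_scoreSigma_mul_gevDensity_rpow (hα : 0 < α) (hσ : 0 < σ) (hξ : ξ < 0)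
    (hexp : 0 ≤ α * (1 + ξ) + ξ) :
    BoundedAtFilter (𝓟 (Iio (μ - σ / ξ))) fun x =>
      scoreSigma μ σ ξ x * gevDensity μ σ ξ x ^ α := by
  have hA : 0 ≤ α * (1 + ξ) := by linarith
  refine (boundedAtFilter_comp_gevS (μ := μ)
    ((((boundedAtFilter_sub_mul_rpow_mul_exp_neg_mul hA hα (ξ + 1)).sub
      (boundedAtFilter_sub_mul_rpow_mul_exp_neg_mul hexp hα (ξ + 1))).const_mul_left ξ⁻¹).sub
      (boundedAtFilter_rpow_mul_exp_neg_mul hA hα) |>.const_mul_left (σ⁻¹ ^ α * σ⁻¹))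
    hσ hξ).congr' ?_ EventuallyEq.rfl
  filter_upwards [mem_principal_self (Iio (μ - σ / ξ))] with x hx
  exact (scoreSigma_mul_gevDensity_rpow hσ hξ.ne (gevT_pos hσ hξ hx)).symm

theorem boundedAtFilter_scoreXi_mul_gevDensity_rpow (hα : 0 < α) (hσ : 0 < σ) (hξ : ξ < 0)
    (hexp : 0 ≤ α * (1 + ξ) + ξ) :
    BoundedAtFilter (𝓟 (Iio (μ - σ / ξ))) fun x => scoreXi μ σ ξ x * gevDensity μ σ ξ x ^ α := by
  have hA : 0 < α * (1 + ξ) := by linarith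
  refine (boundedAtFilter_comp_gevS (μ := μ)
    ((((boundedAtFilter_log_mul_sub_mul_rpow_mul_exp_neg_mul hA hα 1).const_mul_left (-ξ⁻¹)).sub
      (((boundedAtFilter_sub_mul_rpow_mul_exp_neg_mul hA.le hα (ξ + 1)).sub
        (boundedAtFilter_sub_mul_rpow_mul_exp_neg_mul hexp hα (ξ + 1))).const_mul_left
          (ξ ^ 2)⁻¹)).const_mul_left (σ⁻¹ ^ α))
    hσ hξ).congr' ?_ EventuallyEq.rfl
  filter_upwards [mem_principal_self (Iio (μ - σ / ξ))] with x hx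
  exact (scoreXi_mul_gevDensity_rpow hσ hξ.ne (gevT_pos hσ hξ hx)).symm

end GEV

/-- For `ξ < 0` with `ξ ≥ -α/(1+α)`, each score component times `f^α` is bounded on
`(-∞, μ - σ/ξ)`. -/
theorem stmt_10 (α μ σ ξ : ℝ) (hα : 0 < α) (hσ : 0 < σ) (hξ : ξ < 0)
    (hξα : ξ ≥ -α / (1 + α)) :
    (∃ C : ℝ, ∀ x ∈ Set.Iio (μ - σ / ξ),
      |scoreMu μ σ ξ x * gevDensity μ σ ξ x ^ α| ≤ C) ∧
    (∃ C : ℝ, ∀ x ∈ Set.Iio (μ - σ / ξ),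
      |scoreSigma μ σ ξ x * gevDensity μ σ ξ x ^ α| ≤ C) ∧
    (∃ C : ℝ, ∀ x ∈ Set.Iio (μ - σ / ξ),
      |scoreXi μ σ ξ x * gevDensity μ σ ξ x ^ α| ≤ C) := by
  have hexp : 0 ≤ α * (1 + ξ) + ξ := by
    have := (div_le_iff₀ (by linarith : 0 < 1 + α)).1 hξα
    linarith
  exact ⟨exists_abs_le_of_boundedAtFilter_principal
      (boundedAtFilter_scoreMu_mul_gevDensity_rpow hα hσ hξ hexp),
    exists_abs_le_of_boundedAtFilter_principal
      (boundedAtFilter_scoreSigma_mul_gevDensity_rpow hα hσ hξ hexp),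
    exists_abs_le_of_boundedAtFilter_principal
      (boundedAtFilter_scoreXi_mul_gevDensity_rpow hα hσ hξ hexp)⟩
end

section
/- Let α > 0, μ ∈ ℝ, σ > 0 and ξ ≠ 0 with ξ > −(1+α)/(2+α). Then the integral over the support D of (S_μ(x)² + S_σ(x)² + S_ξ(x)²) · f(x; μ,σ,ξ)^{1+α} is finite; in particular every entry of the matrix J_α = ∫_D S(x) S(x)ᵀ f(x; μ,σ,ξ)^{1+α} dx, where S = (S_μ, S_σ, S_ξ)ᵀ, is finite. -/
open MeasureTheory Real

/-
Substitute `u = t(x)^{-1/ξ}`, i.e. `x = μ + σ (u^{-ξ} - 1)/ξ`, which maps `(0, ∞)` bijectively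
onto the support `D`. Then `f = σ⁻¹ u^{ξ+1} e^{-u}` and `|dx/du| = σ u^{-ξ-1}`, so
`f^{1+α} dx` becomes `σ^{-α} u^{(1+ξ)α} e^{-(1+α)u} du`, a multiple of the Gamma law with shape
`a = (1+ξ)α + 1` and rate `1+α`. The scores become linear combinations of
`1, u, u^ξ, u^{ξ+1}, log u, u log u`. A power `u^p` lies in `L²` of this Gamma law when
`2p + a > 0`, and `|log u| ≤ 2 (u^{1/2} + u^{-1/2})` handles the logarithms; the binding constraint
is `p = ξ`, which is exactly `ξ > -(1+α)/(2+α)`. Every entry `S_i S_j` is then integrable by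
Cauchy–Schwarz.
-/

open Set ProbabilityTheory

section GammaMoments

variable {a r : ℝ}

lemma measurable_gammaPDF : Measurable (gammaPDF a r) :=
  (measurable_gammaPDFReal a r).ennreal_ofReal

lemma integrable_gammaMeasure_iff (ha : 0 < a) (hr : 0 < r) {g : ℝ → ℝ} :
    Integrable g (gammaMeasure a r) ↔
      IntegrableOn (fun u => u ^ (a - 1) * exp (-(r * u)) * g u) (Ioi 0) := by
  have hc : r ^ a / Gamma a ≠ 0 := (div_pos (rpow_pos_of_pos hr a) (Gamma_pos_of_pos ha)).ne'
  rw [gammaMeasure, integrable_withDensity_iff measurable_gammaPDF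
    (ae_of_all _ fun _ => ENNReal.ofReal_lt_top)]
  simp_rw [gammaPDF, ENNReal.toReal_ofReal (gammaPDFReal_nonneg ha hr _)]
  rw [← integrableOn_iff_integrable_of_support_subset (s := Ici 0),
    integrableOn_Ici_iff_integrableOn_Ioi,
    integrableOn_congr_fun (g := fun u => r ^ a / Gamma a * (u ^ (a - 1) * exp (-(r * u)) * g u))
      (fun u hu => by simp only [gammaPDFReal, if_pos (le_of_lt (mem_Ioi.1 hu))]; ring)
      measurableSet_Ioi,
    IntegrableOn, IntegrableOn, integrable_const_mul_iff (isUnit_iff_ne_zero.2 hc)]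
  · intro u hu
    by_contra h
    simp [gammaPDFReal, if_neg (show ¬0 ≤ u from h)] at hu

lemma ae_pos_gammaMeasure : ∀ᵐ u ∂gammaMeasure a r, 0 < u := by
  rw [gammaMeasure, ae_withDensity_iff measurable_gammaPDF]
  filter_upwards [volume.ae_ne 0] with u hu hpdf
  by_contra h
  exact hpdf (gammaPDF_of_neg (lt_of_le_of_ne (not_lt.1 h) hu))

lemma memLp_rpow_gammaMeasure (ha : 0 < a) (hr : 0 < r) {p : ℝ} (hp : 0 < 2 * p + a) :
    MemLp (fun u => u ^ p) 2 (gammaMeasure a r) := by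
  rw [memLp_two_iff_integrable_sq (by fun_prop), integrable_gammaMeasure_iff ha hr]
  have := integrableOn_rpow_mul_exp_neg_mul_rpow (s := 2 * p + a - 1) (by linarith) one_pos hr
  refine this.congr_fun (fun u (hu : 0 < u) => ?_) measurableSet_Ioi
  dsimp only
  rw [rpow_one, ← rpow_natCast, ← rpow_mul hu.le, mul_right_comm, ← rpow_add hu]
  ring_nf

lemma abs_log_le_rpow_add_rpow {u : ℝ} (hu : 0 < u) :
    |log u| ≤ 2 * u ^ (1 / 2 : ℝ) + 2 * u ^ (-(1 / 2) : ℝ) := by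
  have h₁ := log_le_rpow_div hu.le (one_half_pos (α := ℝ))
  have h₂ := log_le_rpow_div (inv_nonneg.2 hu.le) (one_half_pos (α := ℝ))
  rw [log_inv, inv_rpow hu.le, ← rpow_neg hu.le] at h₂
  have : 0 < u ^ (1 / 2 : ℝ) := by positivity
  have : 0 < u ^ (-(1 / 2) : ℝ) := by positivity
  rw [abs_le]; constructor <;> linarith

lemma memLp_rpow_mul_log_gammaMeasure (ha : 0 < a) (hr : 0 < r) {p : ℝ} (hp : 0 < 2 * p + a - 1) :
    MemLp (fun u => u ^ p * log u) 2 (gammaMeasure a r) := by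
  have hdom := ((memLp_rpow_gammaMeasure ha hr (p := p + 1 / 2) (by linarith)).const_mul 2).add
    ((memLp_rpow_gammaMeasure ha hr (p := p - 1 / 2) (by linarith)).const_mul 2)
  refine hdom.of_le (by fun_prop) ?_
  filter_upwards [ae_pos_gammaMeasure] with u hu
  have h₁ : u ^ (p + 1 / 2) = u ^ p * u ^ (1 / 2 : ℝ) := rpow_add hu _ _
  have h₂ : u ^ (p - 1 / 2) = u ^ p * u ^ (-(1 / 2) : ℝ) := by rw [sub_eq_add_neg, rpow_add hu]
  have hup : 0 < u ^ p := rpow_pos_of_pos hu p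
  simp only [norm_eq_abs, Pi.add_apply, abs_mul, abs_of_pos hup, h₁, h₂]
  calc u ^ p * |log u| ≤ u ^ p * (2 * u ^ (1 / 2 : ℝ) + 2 * u ^ (-(1 / 2) : ℝ)) :=
        mul_le_mul_of_nonneg_left (abs_log_le_rpow_add_rpow hu) hup.le
    _ ≤ _ := by rw [mul_add, mul_left_comm, mul_left_comm (u ^ p) 2]; exact le_abs_self _

end GammaMoments

/-- The inverse of `x ↦ t(x)^{-1/ξ}` on the support: if `U` is standard exponential, then
`gevPoint μ σ ξ U` has density `gevDensity μ σ ξ`. -/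
noncomputable def gevPoint (μ σ ξ u : ℝ) : ℝ := μ + σ * (u ^ (-ξ) - 1) / ξ

section GevPoint

variable {μ σ ξ u : ℝ}

lemma gevT_gevPoint (hσ : σ ≠ 0) (hξ : ξ ≠ 0) : gevT μ σ ξ (gevPoint μ σ ξ u) = u ^ (-ξ) := by
  unfold gevT gevPoint; field_simp; ring

lemma rpow_neg_rpow_neg_one_div (hξ : ξ ≠ 0) (hu : 0 ≤ u) : (u ^ (-ξ)) ^ (-1 / ξ) = u := by
  rw [show -1 / ξ = (-ξ)⁻¹ by field_simp, rpow_rpow_inv hu (neg_ne_zero.2 hξ)]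

lemma image_gevPoint_Ioi (hσ : σ ≠ 0) (hξ : ξ ≠ 0) :
    gevPoint μ σ ξ '' Ioi 0 = {x | 0 < gevT μ σ ξ x} := by
  ext x
  constructor
  · rintro ⟨u, hu, rfl⟩
    rw [mem_ofPred_eq, gevT_gevPoint hσ hξ]
    exact rpow_pos_of_pos hu _
  · intro hx
    refine ⟨gevT μ σ ξ x ^ (-1 / ξ), rpow_pos_of_pos hx _, ?_⟩
    rw [gevPoint, show -1 / ξ = (-ξ)⁻¹ by field_simp, rpow_inv_rpow hx.le (neg_ne_zero.2 hξ), gevT]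
    field_simp
    ring

lemma injOn_gevPoint (hσ : σ ≠ 0) (hξ : ξ ≠ 0) : InjOn (gevPoint μ σ ξ) (Ioi 0) := by
  intro u hu v hv h
  have := congrArg (fun x => gevT μ σ ξ x ^ (-1 / ξ)) h
  simpa only [gevT_gevPoint hσ hξ, rpow_neg_rpow_neg_one_div hξ (le_of_lt hu),
    rpow_neg_rpow_neg_one_div hξ (le_of_lt hv)] using this

lemma hasDerivAt_gevPoint (hξ : ξ ≠ 0) (hu : 0 < u) :
    HasDerivAt (gevPoint μ σ ξ) (-(σ * u ^ (-ξ - 1))) u := by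
  have h := ((((hasDerivAt_rpow_const (p := -ξ) (Or.inl hu.ne')).sub_const 1).const_mul
    σ).div_const ξ).const_add μ
  exact h.congr_deriv (by field_simp)

lemma gevDensity_gevPoint (hσ : σ ≠ 0) (hξ : ξ ≠ 0) (hu : 0 < u) :
    gevDensity μ σ ξ (gevPoint μ σ ξ u) = σ⁻¹ * u ^ (ξ + 1) * exp (-u) := by
  rw [gevDensity, gevT_gevPoint hσ hξ, if_pos (rpow_pos_of_pos hu _),
    rpow_neg_rpow_neg_one_div hξ hu.le, ← rpow_mul hu.le, show -ξ * (-(ξ + 1) / ξ) = ξ + 1 by field_simp]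

lemma scoreMu_gevPoint (hσ : σ ≠ 0) (hξ : ξ ≠ 0) (hu : 0 < u) :
    scoreMu μ σ ξ (gevPoint μ σ ξ u) = σ⁻¹ * u ^ ξ * (ξ + 1 - u) := by
  rw [scoreMu, gevT_gevPoint hσ hξ, rpow_neg_rpow_neg_one_div hξ hu.le, rpow_neg hu.le]
  have := rpow_pos_of_pos hu ξ
  field_simp

lemma scoreSigma_gevPoint (hσ : σ ≠ 0) (hξ : ξ ≠ 0) (hu : 0 < u) :
    scoreSigma μ σ ξ (gevPoint μ σ ξ u) = -σ⁻¹ + (1 - u ^ ξ) * (ξ + 1 - u) / (ξ * σ) := by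
  rw [scoreSigma, gevT_gevPoint hσ hξ, rpow_neg_rpow_neg_one_div hξ hu.le, gevPoint, rpow_neg hu.le]
  have := rpow_pos_of_pos hu ξ
  field_simp
  ring

lemma scoreXi_gevPoint (hσ : σ ≠ 0) (hξ : ξ ≠ 0) (hu : 0 < u) :
    scoreXi μ σ ξ (gevPoint μ σ ξ u) =
      -(log u * (1 - u)) / ξ - (1 - u ^ ξ) * (ξ + 1 - u) / ξ ^ 2 := by
  rw [scoreXi, gevT_gevPoint hσ hξ, rpow_neg_rpow_neg_one_div hξ hu.le, log_rpow hu, gevPoint,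
    rpow_neg hu.le]
  have := rpow_pos_of_pos hu ξ
  field_simp
  ring

end GevPoint

section Transfer

variable {α μ σ ξ : ℝ}

lemma abs_deriv_gevPoint_mul_gevDensity_rpow (hσ : 0 < σ) (hξ : ξ ≠ 0) {u : ℝ} (hu : 0 < u) :
    |-(σ * u ^ (-ξ - 1))| * gevDensity μ σ ξ (gevPoint μ σ ξ u) ^ (1 + α) =
      σ ^ (-α) * (u ^ ((ξ + 1) * α) * exp (-((1 + α) * u))) := by
  rw [gevDensity_gevPoint hσ.ne' hξ hu, abs_neg, abs_of_pos (by positivity),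
    mul_rpow (by positivity) (exp_pos _).le, mul_rpow (by positivity) (by positivity),
    ← rpow_mul hu.le, ← exp_mul, inv_rpow hσ.le, ← rpow_neg hσ.le]
  have hσα : σ ^ (-α) = σ * σ ^ (-(1 + α)) := by
    rw [show -α = 1 + -(1 + α) by ring, rpow_add hσ, rpow_one]
  have huα : u ^ ((ξ + 1) * α) = u ^ (-ξ - 1) * u ^ ((ξ + 1) * (1 + α)) := by
    rw [← rpow_add hu]; ring_nf
  rw [hσα, huα, show -((1 + α) * u) = -u * (1 + α) by ring]
  ring

lemma integrableOn_mul_gevDensity_rpow (hσ : 0 < σ) (hξ : ξ ≠ 0) (hα : 0 < α) (hξ₁ : -1 < ξ)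
    {g : ℝ → ℝ} (hg : Integrable (g ∘ gevPoint μ σ ξ) (gammaMeasure ((ξ + 1) * α + 1) (1 + α))) :
    IntegrableOn (fun x => g x * gevDensity μ σ ξ x ^ (1 + α)) {x | 0 < gevT μ σ ξ x} := by
  rw [← image_gevPoint_Ioi hσ.ne' hξ, integrableOn_image_iff_integrableOn_abs_deriv_smul
    measurableSet_Ioi (fun u hu => (hasDerivAt_gevPoint hξ hu).hasDerivWithinAt)
    (injOn_gevPoint hσ.ne' hξ)]
  rw [integrable_gammaMeasure_iff (by nlinarith) (by linarith), add_sub_cancel_right] at hg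
  refine IntegrableOn.congr_fun (hg.const_mul (σ ^ (-α))) (fun u hu => ?_) measurableSet_Ioi
  simp only [smul_eq_mul, Function.comp_apply]
  linear_combination -g (gevPoint μ σ ξ u) *
    abs_deriv_gevPoint_mul_gevDensity_rpow (α := α) (μ := μ) hσ hξ hu

end Transfer

section Scores

variable {μ σ ξ a r : ℝ}

lemma memLp_one_sub_rpow_mul_gammaMeasure (ha : 0 < a) (hr : 0 < r) (h : 0 < 2 * ξ + a) :
    MemLp (fun u => (1 - u ^ ξ) * (ξ + 1 - u)) 2 (gammaMeasure a r) := by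
  have := isProbabilityMeasure_gammaMeasure ha hr
  have hid : MemLp (fun u => u ^ (1 : ℝ)) 2 (gammaMeasure a r) :=
    memLp_rpow_gammaMeasure ha hr (by linarith)
  have hξ' := memLp_rpow_gammaMeasure (p := ξ) ha hr h
  have hξ₁ := memLp_rpow_gammaMeasure (p := ξ + 1) ha hr (by linarith)
  refine ((((memLp_const (ξ + 1)).sub hid).sub (hξ'.const_mul (ξ + 1))).add hξ₁).ae_eq ?_
  filter_upwards [ae_pos_gammaMeasure] with u hu
  simp only [Pi.add_apply, Pi.sub_apply, rpow_one, rpow_add_one hu.ne']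
  ring

lemma memLp_scoreMu_comp_gevPoint (hσ : σ ≠ 0) (hξ : ξ ≠ 0) (ha : 0 < a) (hr : 0 < r)
    (h : 0 < 2 * ξ + a) :
    MemLp (scoreMu μ σ ξ ∘ gevPoint μ σ ξ) 2 (gammaMeasure a r) := by
  have := isProbabilityMeasure_gammaMeasure ha hr
  have hid : MemLp (fun u => u ^ (1 : ℝ)) 2 (gammaMeasure a r) :=
    memLp_rpow_gammaMeasure ha hr (by linarith)
  refine ((((memLp_const (ξ + 1)).sub hid).sub
    (memLp_one_sub_rpow_mul_gammaMeasure ha hr h)).const_mul σ⁻¹).ae_eq ?_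
  filter_upwards [ae_pos_gammaMeasure] with u hu
  simp only [Function.comp_apply, Pi.sub_apply, rpow_one, scoreMu_gevPoint hσ hξ hu]
  ring

lemma memLp_scoreSigma_comp_gevPoint (hσ : σ ≠ 0) (hξ : ξ ≠ 0) (ha : 0 < a) (hr : 0 < r)
    (h : 0 < 2 * ξ + a) :
    MemLp (scoreSigma μ σ ξ ∘ gevPoint μ σ ξ) 2 (gammaMeasure a r) := by
  have := isProbabilityMeasure_gammaMeasure ha hr
  refine ((memLp_const (-σ⁻¹)).add
    ((memLp_one_sub_rpow_mul_gammaMeasure ha hr h).const_mul (ξ * σ)⁻¹)).ae_eq ?_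
  filter_upwards [ae_pos_gammaMeasure] with u hu
  simp only [Function.comp_apply, Pi.add_apply, scoreSigma_gevPoint hσ hξ hu]
  ring

lemma memLp_scoreXi_comp_gevPoint (hσ : σ ≠ 0) (hξ : ξ ≠ 0) (ha : 1 < a) (hr : 0 < r)
    (h : 0 < 2 * ξ + a) :
    MemLp (scoreXi μ σ ξ ∘ gevPoint μ σ ξ) 2 (gammaMeasure a r) := by
  have hlog : MemLp (fun u => u ^ (0 : ℝ) * log u) 2 (gammaMeasure a r) :=
    memLp_rpow_mul_log_gammaMeasure (by linarith) hr (by linarith)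
  have hlog₁ : MemLp (fun u => u ^ (1 : ℝ) * log u) 2 (gammaMeasure a r) :=
    memLp_rpow_mul_log_gammaMeasure (by linarith) hr (by linarith)
  refine (((hlog.sub hlog₁).const_mul (-ξ⁻¹)).sub
    ((memLp_one_sub_rpow_mul_gammaMeasure (by linarith) hr h).const_mul (ξ ^ 2)⁻¹)).ae_eq ?_
  filter_upwards [ae_pos_gammaMeasure] with u hu
  simp only [Function.comp_apply, Pi.sub_apply, rpow_zero, rpow_one, scoreXi_gevPoint hσ hξ hu]
  ring

end Scores

/-- For `ξ ≠ 0` with `ξ > -(1+α)/(2+α)`, the integral over the support `D` of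
`(S_μ² + S_σ² + S_ξ²) f^{1+α}` is finite; in particular every entry of the matrix
`J_α = ∫_D S Sᵀ f^{1+α}` with `S = (S_μ, S_σ, S_ξ)ᵀ` is given by a convergent integral. -/
theorem stmt_13 (α μ σ ξ : ℝ) (hα : 0 < α) (hσ : 0 < σ) (hξ0 : ξ ≠ 0)
    (hξ : ξ > -(1 + α) / (2 + α)) :
    IntegrableOn
      (fun x => (scoreMu μ σ ξ x ^ 2 + scoreSigma μ σ ξ x ^ 2 + scoreXi μ σ ξ x ^ 2) *
        gevDensity μ σ ξ x ^ (1 + α))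
      {x : ℝ | 0 < gevT μ σ ξ x} ∧
    ∀ i j : Fin 3,
      IntegrableOn
        (fun x => ![scoreMu μ σ ξ, scoreSigma μ σ ξ, scoreXi μ σ ξ] i x *
          ![scoreMu μ σ ξ, scoreSigma μ σ ξ, scoreXi μ σ ξ] j x *
          gevDensity μ σ ξ x ^ (1 + α))
        {x : ℝ | 0 < gevT μ σ ξ x} := by
  rw [gt_iff_lt, div_lt_iff₀ (by linarith)] at hξ
  have hξ₁ : -1 < ξ := by nlinarith
  have ha : 1 < (ξ + 1) * α + 1 := by nlinarith
  have hr : 0 < 1 + α := by linarith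
  have hS : ∀ i : Fin 3, MemLp (![scoreMu μ σ ξ, scoreSigma μ σ ξ, scoreXi μ σ ξ] i ∘
      gevPoint μ σ ξ) 2 (gammaMeasure ((ξ + 1) * α + 1) (1 + α)) := by
    have h : 0 < 2 * ξ + ((ξ + 1) * α + 1) := by linarith
    intro i
    fin_cases i
    exacts [memLp_scoreMu_comp_gevPoint hσ.ne' hξ0 (by linarith) hr h,
      memLp_scoreSigma_comp_gevPoint hσ.ne' hξ0 (by linarith) hr h,
      memLp_scoreXi_comp_gevPoint hσ.ne' hξ0 ha hr h]
  have hJ : ∀ i j : Fin 3, IntegrableOn (fun x =>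
      ![scoreMu μ σ ξ, scoreSigma μ σ ξ, scoreXi μ σ ξ] i x *
        ![scoreMu μ σ ξ, scoreSigma μ σ ξ, scoreXi μ σ ξ] j x * gevDensity μ σ ξ x ^ (1 + α))
      {x : ℝ | 0 < gevT μ σ ξ x} := fun i j =>
    integrableOn_mul_gevDensity_rpow (g := fun x => _ * _) hσ hξ0 hα hξ₁
      ((hS i).integrable_mul (hS j))
  refine ⟨IntegrableOn.congr_fun_ae (((hJ 0 0).add (hJ 1 1)).add (hJ 2 2))
    (ae_of_all _ fun x => ?_), hJ⟩
  simp [sq, add_mul]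
end
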